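/- Assume the θ-setup and additionally that N is even and N is a perfect square. Then T ≡ 2·(N−1)·v·u'·(C/(N·p) − A) (mod 16). -/
import Mathlib


/-- The odd part of an integer: for `n ≠ 0`, `n = 2 ^ (padicValInt 2 n) * oddPart n`. -/
def oddPart (n : ℤ) : ℤ := n / 2 ^ (padicValInt 2 n)

private lemma eight_dvd_sq_sub_one {x : ℤ} (hx : Odd x) : (8:ℤ) ∣ x ^ 2 - 1 := by
  obtain ⟨k, hk⟩ := hx
  obtain ⟨m, hm⟩ := Int.even_mul_succ_self k
  exact ⟨m, by subst hk; linear_combination 4 * hm⟩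

private lemma oddPart_odd {n : ℤ} (hn : n ≠ 0) : Odd (oddPart n) := by
  haveI : Fact (Nat.Prime 2) := ⟨Nat.prime_two⟩
  rw [← Int.not_even_iff_odd]
  rintro ⟨k, hk⟩
  have hd : (2:ℤ) ^ (padicValInt 2 n) ∣ n := by
    simpa using padicValInt_dvd (p := 2) n
  have hne : n = 2 ^ (padicValInt 2 n) * oddPart n := (Int.mul_ediv_cancel' hd).symm
  have : ((2:ℕ):ℤ) ^ (padicValInt 2 n + 1) ∣ n :=
    ⟨k, by push_cast; linear_combination hne + 2 ^ padicValInt 2 n * hk⟩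
  rw [padicValInt_dvd_iff] at this
  omega

private lemma oddPart_mul_self {r : ℤ} (hr : r ≠ 0) :
    oddPart (r * r) = oddPart r * oddPart r := by
  haveI : Fact (Nat.Prime 2) := ⟨Nat.prime_two⟩
  have hd : (2:ℤ) ^ (padicValInt 2 r) ∣ r := by simpa using padicValInt_dvd (p := 2) r
  obtain ⟨s, hs⟩ := hd
  have h2 : oddPart r = s :=
    Int.ediv_eq_of_eq_mul_left (by positivity) (by linear_combination hs)
  have hmul : padicValInt 2 (r * r) = padicValInt 2 r + padicValInt 2 r :=
    padicValInt.mul hr hr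
  rw [oddPart, hmul, h2]
  exact Int.ediv_eq_of_eq_mul_left (by positivity)
    (by push_cast [pow_add]; linear_combination (r + 2 ^ padicValInt 2 r * s) * hs)



/-- In the θ-setup with `N` an even perfect square dividing `C`,
`T ≡ 2·(N−1)·v·u'·(C/(N·p) − A) (mod 16)`. -/
theorem lemma_thetamod8
    (N A B C u v p D Θ T : ℤ)
    (hN : 2 ≤ N) (hA : Int.gcd A N = 1) (hv : v ≠ 0)
    (hp : Prime p) (hp6 : ¬ p ∣ 6 * N)
    (hNC : N ∣ C) (hpC : p ∣ C) (hpu : p ∣ u)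
    (hpeq : p = u * (u - v * B) + v ^ 2 * A * C)
    (hD : D = B ^ 2 - 4 * A * C)
    (hΘ : Θ = (N - 1) * v * ((u - v * B) * (C / (N * p)) +
      A * ((u / p) * (1 - (u - v * B) ^ 2) - (u - v * B))))
    (hT : T = 2 * Θ + 6 * oddPart v * oddPart A * (oddPart N - 1) * ((u - v * B) - 1) +
      3 * (padicValInt 2 N : ℤ) * ((u - v * B) ^ 2 - 1))
    (hNeven : Even N) (hNsq : IsSquare N) :
    T ≡ 2 * (N - 1) * v * (u - v * B) * (C / (N * p) - A) [ZMOD 16] := by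
  haveI : Fact (Nat.Prime 2) := ⟨Nat.prime_two⟩
  have hpodd : Odd p := by
    rw [← Int.natAbs_odd]
    have hpn : Nat.Prime p.natAbs := Int.prime_iff_natAbs_prime.mp hp
    refine hpn.odd_of_ne_two fun h => hp6 ?_
    exact dvd_mul_of_dvd_left (by rw [← Int.natAbs_dvd, h]; norm_num) N
  have hCeven : Even C := by
    obtain ⟨m, hm⟩ := hNC
    obtain ⟨k, hk⟩ := hNeven
    exact ⟨k * m, by rw [hm, hk]; ring⟩
  have hu' : Odd (u - v * B) := by
    rcases Int.even_or_odd (u - v * B) with he | ho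
    · exfalso
      have h1 : Even (u * (u - v * B)) := he.mul_left u
      have h2 : Even (v ^ 2 * A * C) := hCeven.mul_left _
      have := h1.add h2
      rw [← hpeq] at this
      exact (Int.not_even_iff_odd.mpr hpodd) this
    · exact ho
  obtain ⟨a, ha⟩ := eight_dvd_sq_sub_one hu'
  obtain ⟨c, hc⟩ := hu'
  obtain ⟨r, hr⟩ := hNsq
  have hr0 : r ≠ 0 := by rintro rfl; simp at hr; omega
  obtain ⟨b, hb⟩ := eight_dvd_sq_sub_one (oddPart_odd hr0)
  have hbN : oddPart N - 1 = 8 * b := by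
    rw [hr, oddPart_mul_self hr0]
    linear_combination hb
  obtain ⟨d, hd⟩ : Even (padicValInt 2 N : ℤ) := by
    rw [hr, padicValInt.mul hr0 hr0]; push_cast; exact Even.add_self _
  symm
  rw [Int.modEq_iff_dvd]
  refine ⟨-((N - 1) * v * A * (u / p) * a) + 6 * oddPart v * oddPart A * b * c
      + 3 * d * a, ?_⟩
  rw [hT, hΘ]
  linear_combination (-(2 * (N - 1) * v * A * (u / p)) + 6 * d) * ha
    + (6 * oddPart v * oddPart A * ((u - v * B) - 1)) * hbN
    + (48 * oddPart v * oddPart A * b) * hc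
    + (3 * ((u - v * B) ^ 2 - 1)) * hd
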